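/- Let x > 0 and 1 < a < b < M+1. Then dim_H Φ_x(𝒰(x) ∩ (a, b)) / log b ≤ dim_H(𝒰(x) ∩ (a, b)) ≤ dim_H Φ_x(𝒰(x) ∩ (a, b)) / log a, where the dimension of 𝒰(x) ∩ (a,b) ⊆ ℝ is with respect to the Euclidean metric, the dimension of its image under Φ_x is with respect to the metric ρ, and logarithms are taken to base M+1. -/

import Mathlib

open scoped ENNReal NNReal Classical

namespace Expansions

/-- Digit sequences over the alphabet `{0,1,…,M}`; index `i : ℕ` represents the
`(i+1)`-st digit `d_{i+1}` of the paper. -/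
abbrev Digits (M : ℕ) := ℕ → Fin (M + 1)

/-- `π_q((d_i)) = Σ_{i≥1} d_i / q^i`. -/
noncomputable def piQ (M : ℕ) (q : ℝ) (d : Digits M) : ℝ :=
  ∑' i : ℕ, (d i : ℝ) / q ^ (i + 1)

/-- `𝒰_q` : the set of real numbers having a unique `q`-expansion. -/
def Uq (M : ℕ) (q : ℝ) : Set ℝ := {x | ∃! d : Digits M, piQ M q d = x}

/-- `𝐔_q` : the set of sequences that are the unique `q`-expansion of their value. -/
def UqSym (M : ℕ) (q : ℝ) : Set (Digits M) :=
  {d | ∀ e : Digits M, piQ M q e = piQ M q d → e = d}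

/-- `𝒰(x)` : the set of univoque bases of `x`. -/
def Ubases (M : ℕ) (x : ℝ) : Set ℝ :=
  {q | q ∈ Set.Ioc (1 : ℝ) ((M : ℝ) + 1) ∧ x ∈ Uq M q}

/-- `q_x = min{M+1, 1+M/x}`. -/
noncomputable def qx (M : ℕ) (x : ℝ) : ℝ := min ((M : ℝ) + 1) (1 + (M : ℝ) / x)

/-- Strict lexicographic order on digit sequences. -/
def lexLt {M : ℕ} (c d : Digits M) : Prop := ∃ n, (∀ i < n, c i = d i) ∧ c n < d n

def lexLe {M : ℕ} (c d : Digits M) : Prop := c = d ∨ lexLt c d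

/-- The sequence ends with `0^∞`. -/
def EndsInZero {M : ℕ} (d : Digits M) : Prop := ∃ N, ∀ n ≥ N, d n = 0

/-- `d` is the quasi-greedy `q`-expansion of `x`: the lexicographically largest
`q`-expansion of `x` not ending with `0^∞`. -/
def IsQuasiGreedy (M : ℕ) (q x : ℝ) (d : Digits M) : Prop :=
  piQ M q d = x ∧ ¬ EndsInZero d ∧
    ∀ e : Digits M, piQ M q e = x → ¬ EndsInZero e → lexLe e d

/-- `Φ_x(q)`: the quasi-greedy `q`-expansion of `x` (junk value if none exists). -/
noncomputable def Phi (M : ℕ) (x q : ℝ) : Digits M :=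
  if h : ∃ d : Digits M, IsQuasiGreedy M q x d then h.choose else fun _ => 0

/-- `𝐔(x) = {Φ_x(q) : q ∈ 𝒰(x)}`. -/
def UxSym (M : ℕ) (x : ℝ) : Set (Digits M) := (Phi M x) '' (Ubases M x)

/-- `ρ((c_i),(d_i)) = (M+1)^{-inf{i ≥ 1 : c_i ≠ d_i}}` (our index `n` represents the
`(n+1)`-st digit, whence the exponent `-(n+1)`); `ρ(c,c) = 0`. -/
noncomputable def rho (M : ℕ) (c d : Digits M) : ℝ :=
  if c = d then 0
  else ((M : ℝ) + 1) ^ (-(((sInf {i | c i ≠ d i} : ℕ) : ℤ) + 1))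

/-- Diameter of a set with respect to a distance function, valued in `ℝ≥0∞`. -/
noncomputable def gdiam {X : Type*} (dist : X → X → ℝ) (A : Set X) : ℝ≥0∞ :=
  ⨆ x ∈ A, ⨆ y ∈ A, ENNReal.ofReal (dist x y)

/-- The `s`-dimensional Hausdorff outer measure with respect to a distance function:
`lim_{δ→0⁺} inf {Σ diam(C n)^s : A ⊆ ⋃ C n, diam (C n) ≤ δ}`. -/
noncomputable def gHMeasure {X : Type*} (dist : X → X → ℝ) (s : ℝ) (A : Set X) : ℝ≥0∞ :=
  ⨆ (δ : ℝ) (_ : 0 < δ),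
    ⨅ (C : ℕ → Set X) (_ : A ⊆ ⋃ n, C n)
      (_ : ∀ n, gdiam dist (C n) ≤ ENNReal.ofReal δ),
      ∑' n, gdiam dist (C n) ^ s

/-- Hausdorff dimension with respect to a distance function. -/
noncomputable def gdimH {X : Type*} (dist : X → X → ℝ) (A : Set X) : ℝ≥0∞ :=
  ⨆ (s : ℝ≥0) (_ : gHMeasure dist (s : ℝ) A = ⊤), (s : ℝ≥0∞)

/-- The generalized golden ratio `q_G`. -/
noncomputable def qG (M : ℕ) : ℝ :=
  if M % 2 = 0 then ((M / 2 : ℕ) : ℝ) + 1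
  else (((M / 2 : ℕ) : ℝ) + 1 +
    Real.sqrt (((M / 2 : ℕ) : ℝ) ^ 2 + 6 * ((M / 2 : ℕ) : ℝ) + 5)) / 2

/-- `x_G = M/(q_G - 1)`. -/
noncomputable def xG (M : ℕ) : ℝ := (M : ℝ) / (qG M - 1)

/-- The Komornik–Loreti constant `q_KL = min 𝒰(1)`. -/
noncomputable def qKL (M : ℕ) : ℝ := sInf (Ubases M 1)

/-- `x_KL = M/(q_KL - 1)`. -/
noncomputable def xKL (M : ℕ) : ℝ := (M : ℝ) / (qKL M - 1)

/-- `X_iso`: the set of `x > 0` such that `𝒰(x)` contains an isolated point. -/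
def Xiso (M : ℕ) : Set ℝ :=
  {x | 0 < x ∧ ∃ q ∈ Ubases M x, ∃ ε > 0, Ubases M x ∩ Set.Ioo (q - ε) (q + ε) = {q}}

/-- The bifurcation set `𝒱 = {q ∈ (1,M+1] : 𝐔_r ≠ 𝐔_q for all r > q}`. -/
def Vset (M : ℕ) : Set ℝ :=
  {q | q ∈ Set.Ioc (1 : ℝ) ((M : ℝ) + 1) ∧
    ∀ r ∈ Set.Ioc (1 : ℝ) ((M : ℝ) + 1), q < r → UqSym M r ≠ UqSym M q}

/-- The Thue–Morse sequence `τ_i` = parity of the binary digit sum of `i`. -/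
def tm (i : ℕ) : ℕ := (Nat.digits 2 i).sum % 2

/-!
For bases `p < q` in `𝒰(x) ∩ (a, b)` whose expansions `c = Φ_x(p)` and `d = Φ_x(q)` first
differ at index `n` (then `c n < d n`), one has `K₁ b^{-(n+1)} ≤ q - p ≤ K₂ a^{-(n+1)}`.

Lower bound: in a unique expansion the tail after a digit `< M` has value `< 1`, and the tail
after a nonzero digit has value `> M/(q-1) - 1 ≥ M/(b-1) - 1 > 0`. Hence
`π_p(d) - π_p(c) ≳ b^{-(n+1)}`, while `π_p(c) = x = π_q(d)` and `t ↦ π_t(d)` is Lipschitz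
on `[a, ∞)` uniformly in `d`.

Upper bound: `π_p(d) - π_p(c) ≤ M/(a-1) a^{-n}` because `c` and `d` agree up to `n`, while
`π_p(d) - π_q(d) ≳ q - p` because `d` has a nonzero digit among the first `J` ones, `J`
depending only on `x` and `a`.

As `ρ(c, d) = (M+1)^{-(n+1)}`, the map `Φ_x` is Hölder of exponent `log_b (M+1)` on the set
and its inverse is Hölder of exponent `log_{M+1} a`; a Hölder map of exponent `r` multiplies
Hausdorff dimension by at most `1/r`.
-/

open MeasureTheory Set PiNat

section Series

variable {M : ℕ} {p q : ℝ}

lemma hasSum_const_div_pow_succ (hq : 1 < q) (C : ℝ) :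
    HasSum (fun i : ℕ => C / q ^ (i + 1)) (C / (q - 1)) := by
  have hq0 : 0 < q := by linarith
  have hgeom := (hasSum_geometric_of_lt_one (inv_nonneg.2 hq0.le)
    (inv_lt_one_of_one_lt₀ hq)).mul_left (C / q)
  have hterm : (fun i : ℕ => C / q * q⁻¹ ^ i) = fun i => C / q ^ (i + 1) := by
    ext i; rw [inv_pow, pow_succ']; field_simp
  have hsum : C / q * (1 - q⁻¹)⁻¹ = C / (q - 1) := by
    have : q - 1 ≠ 0 := by linarith
    field_simp
  rwa [hterm, hsum] at hgeom

lemma summable_piQ (hq : 1 < q) (d : Digits M) :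
    Summable fun i => (d i : ℝ) / q ^ (i + 1) :=
  (hasSum_const_div_pow_succ hq M).summable.of_nonneg_of_le (fun _ => by positivity)
    fun i => by gcongr; exact Fin.is_le (d i)

lemma piQ_nonneg (hq : 0 ≤ q) (d : Digits M) : 0 ≤ piQ M q d :=
  tsum_nonneg fun _ => by positivity

lemma piQ_le (hq : 1 < q) (d : Digits M) : piQ M q d ≤ M / (q - 1) :=
  hasSum_le (fun i => by gcongr; exact Fin.is_le (d i)) (summable_piQ hq d).hasSum
    (hasSum_const_div_pow_succ hq M)

def shift (k : ℕ) (d : Digits M) : Digits M := fun i => d (i + k)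

lemma shift_shift (k l : ℕ) (d : Digits M) : shift k (shift l d) = shift (k + l) d := by
  ext i; simp [shift, Nat.add_assoc]

lemma piQ_eq_sum_add_piQ_shift (hq : 1 < q) (d : Digits M) (k : ℕ) :
    piQ M q d =
      ∑ i ∈ Finset.range k, (d i : ℝ) / q ^ (i + 1) + piQ M q (shift k d) / q ^ k := by
  rw [piQ, ← (summable_piQ hq d).sum_add_tsum_nat_add k, piQ, ← tsum_div_const]
  congr 1
  refine tsum_congr fun i => ?_
  rw [shift, div_div, ← pow_add]
  ring_nf

lemma piQ_eq_zero {d : Digits M} (h : ∀ i, d i = 0) : piQ M q d = 0 := by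
  simp [piQ, h]

lemma piQ_le_of_eqOn_zero (hq : 1 < q) {d : Digits M} {J : ℕ} (h : ∀ i < J, d i = 0) :
    piQ M q d ≤ M / (q - 1) / q ^ J := by
  rw [piQ_eq_sum_add_piQ_shift hq d J,
    Finset.sum_eq_zero fun i hi => by simp [h i (Finset.mem_range.1 hi)], zero_add]
  gcongr
  exact piQ_le hq _

lemma piQ_eq_digit_add_piQ_shift (hq : 1 < q) (d : Digits M) :
    piQ M q d = (d 0 : ℝ) / q + piQ M q (shift 1 d) / q := by
  simpa using piQ_eq_sum_add_piQ_shift hq d 1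

lemma piQ_sub_piQ_of_eqOn {c d : Digits M} (hq : 1 < q) {n : ℕ} (h : ∀ i < n, c i = d i) :
    piQ M q d - piQ M q c = (piQ M q (shift n d) - piQ M q (shift n c)) / q ^ n := by
  rw [piQ_eq_sum_add_piQ_shift hq d n, piQ_eq_sum_add_piQ_shift hq c n,
    Finset.sum_congr rfl fun i hi => by rw [← h i (Finset.mem_range.1 hi)]]
  ring

lemma piQ_sub_piQ_of_eqOn_succ {c d : Digits M} (hq : 1 < q) {n : ℕ}
    (h : ∀ i < n, c i = d i) :
    piQ M q d - piQ M q c =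
      ((d n : ℝ) - c n + (piQ M q (shift (n + 1) d) - piQ M q (shift (n + 1) c)))
        / q ^ (n + 1) := by
  rw [piQ_sub_piQ_of_eqOn hq h, piQ_eq_digit_add_piQ_shift hq (shift n d),
    piQ_eq_digit_add_piQ_shift hq (shift n c), shift_shift, shift_shift, add_comm 1 n]
  simp only [shift, zero_add]
  have : q ≠ 0 := by linarith
  field_simp
  ring

lemma inv_pow_sub_inv_pow_le (hp : 0 < p) (hpq : p ≤ q) (k : ℕ) :
    (p ^ (k + 1))⁻¹ - (q ^ (k + 1))⁻¹ ≤ (q - p) * (k + 1) / p ^ (k + 2) := by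
  have hq : 0 < q := hp.trans_le hpq
  have hdiff : q ^ (k + 1) - p ^ (k + 1) ≤ (q - p) * (k + 1) * q ^ k := by
    have h := abs_pow_sub_pow_le q p (k + 1)
    rwa [abs_of_nonneg (sub_nonneg.2 (pow_le_pow_left₀ hp.le hpq _)),
      abs_of_nonneg (sub_nonneg.2 hpq), abs_of_pos hp, abs_of_pos hq, max_eq_left hpq,
      Nat.add_sub_cancel, Nat.cast_succ] at h
  calc (p ^ (k + 1))⁻¹ - (q ^ (k + 1))⁻¹
        = (q ^ (k + 1) - p ^ (k + 1)) / (p ^ (k + 1) * q ^ (k + 1)) := by field_simp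
    _ ≤ (q - p) * (k + 1) * q ^ k / (p ^ (k + 1) * q ^ (k + 1)) := by gcongr
    _ = (q - p) * (k + 1) / (p ^ (k + 1) * q) := by field_simp; ring
    _ ≤ (q - p) * (k + 1) / p ^ (k + 2) := by
        have : 0 ≤ (q - p) * (k + 1) := mul_nonneg (by linarith) (by positivity)
        gcongr
        rw [pow_succ]; gcongr

lemma inv_pow_sub_inv_pow_ge (hp : 0 < p) (hpq : p ≤ q) (k : ℕ) :
    (q - p) / q ^ (k + 2) ≤ (p ^ (k + 1))⁻¹ - (q ^ (k + 1))⁻¹ := by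
  have hq : 0 < q := hp.trans_le hpq
  have hpk : p ^ (k + 1) ≤ p * q ^ k := by rw [pow_succ']; gcongr
  calc (q - p) / q ^ (k + 2) ≤ (q - p) / (p * q ^ (k + 1)) := by
        have : 0 ≤ q - p := by linarith
        gcongr
        rw [pow_succ' q (k + 1)]; gcongr
    _ = (p * q ^ k)⁻¹ - (q ^ (k + 1))⁻¹ := by field_simp; ring
    _ ≤ (p ^ (k + 1))⁻¹ - (q ^ (k + 1))⁻¹ := by gcongr

end Series

section Base

variable {M : ℕ} {a p q : ℝ}

lemma piQ_le_piQ_of_le (hp : 1 < p) (hpq : p ≤ q) (d : Digits M) : piQ M q d ≤ piQ M p d :=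
  Summable.tsum_le_tsum (fun i => by gcongr) (summable_piQ (hp.trans_le hpq) d)
    (summable_piQ hp d)

lemma hasSum_piQ_sub_piQ (hp : 1 < p) (hpq : p ≤ q) (d : Digits M) :
    HasSum (fun i => (d i : ℝ) * ((p ^ (i + 1))⁻¹ - (q ^ (i + 1))⁻¹))
      (piQ M p d - piQ M q d) := by
  have hterm : (fun i => (d i : ℝ) * ((p ^ (i + 1))⁻¹ - (q ^ (i + 1))⁻¹))
      = fun i => (d i : ℝ) / p ^ (i + 1) - (d i : ℝ) / q ^ (i + 1) := by
    ext i; ring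
  rw [hterm]
  exact (summable_piQ hp d).hasSum.sub (summable_piQ (hp.trans_le hpq) d).hasSum

lemma piQ_sub_piQ_ge (hp : 1 < p) (hpq : p ≤ q) {d : Digits M} {j : ℕ} (hj : d j ≠ 0) :
    (q - p) / q ^ (j + 2) ≤ piQ M p d - piQ M q d := by
  have hp0 : 0 < p := by linarith
  have hdj : (1 : ℝ) ≤ d j := by exact_mod_cast Fin.pos_iff_ne_zero.2 hj
  calc (q - p) / q ^ (j + 2) ≤ (p ^ (j + 1))⁻¹ - (q ^ (j + 1))⁻¹ :=
        inv_pow_sub_inv_pow_ge hp0 hpq j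
    _ ≤ (d j : ℝ) * ((p ^ (j + 1))⁻¹ - (q ^ (j + 1))⁻¹) :=
        le_mul_of_one_le_left (sub_nonneg.2 (by gcongr)) hdj
    _ ≤ _ := le_hasSum (hasSum_piQ_sub_piQ hp hpq d) j fun i _ =>
        mul_nonneg (by positivity) (sub_nonneg.2 (by gcongr))

lemma piQ_lt_piQ_of_lt (hp : 1 < p) (hpq : p < q) {d : Digits M} {j : ℕ} (hj : d j ≠ 0) :
    piQ M q d < piQ M p d := by
  have hq0 : 0 < q := by linarith
  have := piQ_sub_piQ_ge hp hpq.le hj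
  have : 0 < (q - p) / q ^ (j + 2) := div_pos (by linarith) (by positivity)
  linarith

lemma summable_succ_div_pow (ha : 1 < a) :
    Summable fun i : ℕ => ((i : ℝ) + 1) / a ^ (i + 2) := by
  have hr : ‖a⁻¹‖ < 1 := by
    rw [norm_inv, Real.norm_of_nonneg (by linarith)]; exact inv_lt_one_of_one_lt₀ ha
  have h0 : Summable fun n : ℕ => (n : ℝ) * a⁻¹ ^ n := by
    simpa using summable_pow_mul_geometric_of_norm_lt_one (R := ℝ) 1 hr
  have h1 : Summable fun n : ℕ => ((n + 1 : ℕ) : ℝ) * a⁻¹ ^ (n + 1) :=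
    (summable_nat_add_iff 1).2 h0
  refine (h1.div_const a).congr fun i => ?_
  push_cast
  rw [inv_pow, pow_succ _ (i + 1)]
  field_simp

lemma exists_piQ_sub_piQ_le (ha : 1 < a) :
    ∃ L > 0, ∀ (d : Digits M) (p q : ℝ), a ≤ p → p ≤ q →
      piQ M p d - piQ M q d ≤ L * (q - p) := by
  obtain ⟨S, hS⟩ := summable_succ_div_pow ha
  have hS0 : 0 ≤ S := hS.nonneg fun _ => by positivity
  refine ⟨M * S + 1, by positivity, fun d p q hap hpq => ?_⟩
  have hp : 1 < p := ha.trans_le hap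
  have hterm : ∀ i : ℕ, (d i : ℝ) * ((p ^ (i + 1))⁻¹ - (q ^ (i + 1))⁻¹)
      ≤ (q - p) * M * (((i : ℝ) + 1) / a ^ (i + 2)) := fun i =>
    calc (d i : ℝ) * ((p ^ (i + 1))⁻¹ - (q ^ (i + 1))⁻¹)
        ≤ M * ((q - p) * (i + 1) / p ^ (i + 2)) := by
          gcongr
          · exact sub_nonneg.2 (by gcongr)
          · exact Fin.is_le (d i)
          · exact inv_pow_sub_inv_pow_le (by linarith) hpq i
      _ ≤ M * ((q - p) * (i + 1) / a ^ (i + 2)) := by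
          have : 0 ≤ q - p := by linarith
          gcongr
      _ = (q - p) * M * (((i : ℝ) + 1) / a ^ (i + 2)) := by ring
  have := hasSum_le hterm (hasSum_piQ_sub_piQ hp hpq d) (hS.mul_left ((q - p) * M))
  nlinarith

end Base

section Greedy

variable {M : ℕ} {q y : ℝ}

noncomputable def greedyDigit (M : ℕ) (q r : ℝ) : Fin (M + 1) :=
  ⟨min M ⌊q * r⌋₊, by omega⟩

noncomputable def greedyRem (M : ℕ) (q y : ℝ) : ℕ → ℝ
  | 0 => y
  | n + 1 => q * greedyRem M q y n - greedyDigit M q (greedyRem M q y n)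

lemma sub_greedyDigit_mem_Icc (hq : 1 < q) (hqM : q ≤ M + 1) {r : ℝ}
    (hr : r ∈ Icc 0 (M / (q - 1))) : q * r - greedyDigit M q r ∈ Icc 0 (M / (q - 1)) := by
  obtain ⟨hr0, hrM⟩ := hr
  have hq1 : 0 < q - 1 := by linarith
  have hqr : 0 ≤ q * r := by positivity
  show q * r - ((min M ⌊q * r⌋₊ : ℕ) : ℝ) ∈ _
  rcases le_total ⌊q * r⌋₊ M with h | h
  · rw [min_eq_right h]
    have hone : 1 ≤ M / (q - 1) := by rw [le_div_iff₀ hq1]; linarith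
    exact ⟨sub_nonneg.2 (Nat.floor_le hqr), by linarith [Nat.lt_floor_add_one (q * r)]⟩
  · rw [min_eq_left h]
    have hM : (M : ℝ) ≤ q * r := (Nat.cast_le.2 h).trans (Nat.floor_le hqr)
    have : q * (M / (q - 1)) - M = M / (q - 1) := by field_simp; ring
    exact ⟨by linarith, by nlinarith⟩

lemma greedyRem_mem_Icc (hq : 1 < q) (hqM : q ≤ M + 1) (hy : y ∈ Icc 0 (M / (q - 1)))
    (n : ℕ) : greedyRem M q y n ∈ Icc 0 (M / (q - 1)) := by
  induction n with
  | zero => exact hy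
  | succ n ih => exact sub_greedyDigit_mem_Icc hq hqM ih

lemma eq_sum_greedyDigit_add_greedyRem (hq : 0 < q) (n : ℕ) :
    y = ∑ i ∈ Finset.range n, (greedyDigit M q (greedyRem M q y i) : ℝ) / q ^ (i + 1)
      + greedyRem M q y n / q ^ n := by
  induction n with
  | zero => simp [greedyRem]
  | succ n ih =>
    rw [Finset.sum_range_succ, greedyRem]
    conv_lhs => rw [ih]
    field_simp
    ring

theorem exists_piQ_eq (hq : 1 < q) (hqM : q ≤ M + 1) (hy : y ∈ Icc 0 (M / (q - 1))) :
    ∃ d : Digits M, piQ M q d = y := by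
  have hq0 : 0 < q := by linarith
  refine ⟨fun n => greedyDigit M q (greedyRem M q y n), HasSum.tsum_eq ?_⟩
  rw [hasSum_iff_tendsto_nat_of_nonneg (fun _ => by positivity)]
  have hrem : Filter.Tendsto (fun n => greedyRem M q y n / q ^ n) Filter.atTop (nhds 0) := by
    have hgeom := (tendsto_pow_atTop_nhds_zero_of_lt_one (inv_nonneg.2 hq0.le)
      (inv_lt_one_of_one_lt₀ hq)).const_mul (M / (q - 1))
    rw [mul_zero] at hgeom
    refine squeeze_zero (fun n => div_nonneg (greedyRem_mem_Icc hq hqM hy n).1 (by positivity))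
      (fun n => ?_) hgeom
    rw [inv_pow, ← div_eq_mul_inv]
    gcongr
    exact (greedyRem_mem_Icc hq hqM hy n).2
  have hpartial : ∀ n,
      ∑ i ∈ Finset.range n, (greedyDigit M q (greedyRem M q y i) : ℝ) / q ^ (i + 1)
        = y - greedyRem M q y n / q ^ n := fun n => by
    linarith [eq_sum_greedyDigit_add_greedyRem (M := M) (y := y) hq0 n]
  simp_rw [hpartial]
  simpa using (tendsto_const_nhds (x := y)).sub hrem

end Greedy

section Unique

variable {M : ℕ} {q x : ℝ} {d : Digits M}

def splice (k : ℕ) (d : Digits M) (a : Fin (M + 1)) (e : Digits M) : Digits M :=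
  fun i => if i < k then d i else if i = k then a else e (i - (k + 1))

lemma piQ_splice (hq : 1 < q) (k : ℕ) (d : Digits M) (a : Fin (M + 1)) (e : Digits M) :
    piQ M q (splice k d a e) = ∑ i ∈ Finset.range k, (d i : ℝ) / q ^ (i + 1)
      + (a : ℝ) / q ^ (k + 1) + piQ M q e / q ^ (k + 1) := by
  have hshift : shift (k + 1) (splice k d a e) = e := by
    ext i
    simp [shift, splice, show ¬ i + (k + 1) < k by omega, show i + (k + 1) ≠ k by omega]
  rw [piQ_eq_sum_add_piQ_shift hq _ (k + 1), hshift, Finset.sum_range_succ]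
  congr 2
  · exact Finset.sum_congr rfl fun i hi => by simp [splice, Finset.mem_range.1 hi]
  · simp [splice]

/-- Changing the digit `d k` to `a` and compensating in the tail would give a second expansion. -/
lemma digit_sub_add_piQ_shift_notMem_Icc (hq : 1 < q) (hqM : q ≤ M + 1) (hd : d ∈ UqSym M q)
    {k : ℕ} {a : Fin (M + 1)} (ha : a ≠ d k) :
    (d k : ℝ) - a + piQ M q (shift (k + 1) d) ∉ Icc 0 (M / (q - 1)) := by
  intro hmem
  obtain ⟨e, he⟩ := exists_piQ_eq hq hqM hmem
  have hsame : piQ M q (splice k d a e) = piQ M q d := by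
    rw [piQ_splice hq, he, piQ_eq_sum_add_piQ_shift hq d (k + 1), Finset.sum_range_succ]
    ring
  exact ha (by simpa [splice] using congrFun (hd _ hsame) k)

lemma piQ_shift_lt_one (hq : 1 < q) (hqM : q ≤ M + 1) (hd : d ∈ UqSym M q) {k : ℕ}
    (hk : (d k : ℕ) < M) : piQ M q (shift (k + 1) d) < 1 := by
  have h := digit_sub_add_piQ_shift_notMem_Icc hq hqM hd (k := k)
    (a := ⟨d k + 1, by omega⟩) (Fin.ne_of_gt (Nat.lt_succ_self _))
  have := piQ_le hq (shift (k + 1) d)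
  simp only [mem_Icc, not_and_or, not_le] at h
  push_cast at h
  rcases h with h | h <;> linarith

lemma sub_one_lt_piQ_shift (hq : 1 < q) (hqM : q ≤ M + 1) (hd : d ∈ UqSym M q) {k : ℕ}
    (hk : d k ≠ 0) : M / (q - 1) - 1 < piQ M q (shift (k + 1) d) := by
  have hk1 : 1 ≤ (d k : ℕ) := Fin.pos_iff_ne_zero.2 hk
  have h := digit_sub_add_piQ_shift_notMem_Icc hq hqM hd (k := k)
    (a := ⟨d k - 1, by omega⟩) (by rw [Ne, Fin.ext_iff]; dsimp only; omega)
  have := piQ_nonneg (by linarith) (shift (k + 1) d) (M := M) (q := q)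
  simp only [mem_Icc, not_and_or, not_le] at h
  push_cast [Nat.cast_sub hk1] at h
  rcases h with h | h <;> linarith

lemma eq_zero_of_endsInZero (hq : 1 < q) (hqM : q ≤ M + 1) (hd : d ∈ UqSym M q)
    (h : EndsInZero d) : ∀ i, d i = 0 := by
  obtain ⟨N, hN⟩ := h
  induction N with
  | zero => exact fun i => hN i (Nat.zero_le i)
  | succ N ih =>
    refine ih fun n hn => (Nat.lt_or_eq_of_le hn).elim (fun h => hN n h) fun h => ?_
    subst h
    by_contra hne
    have hlazy := sub_one_lt_piQ_shift hq hqM hd hne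
    rw [piQ_eq_zero (d := shift (N + 1) d) fun i => hN _ (by omega)] at hlazy
    have : 1 ≤ M / (q - 1) := by rw [le_div_iff₀ (by linarith)]; linarith
    linarith

lemma Phi_piQ (hq : 1 < q) (hqM : q ≤ M + 1) (hd : d ∈ UqSym M q) (hx : 0 < piQ M q d) :
    Phi M (piQ M q d) q = d := by
  have hqg : IsQuasiGreedy M q (piQ M q d) d := by
    refine ⟨rfl, fun hz => hx.ne' (piQ_eq_zero (eq_zero_of_endsInZero hq hqM hd hz)), ?_⟩
    exact fun e he _ => Or.inl (hd e he)
  have hex : ∃ d', IsQuasiGreedy M q (piQ M q d) d' := ⟨d, hqg⟩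
  rw [Phi, dif_pos hex]
  exact hd _ hex.choose_spec.1

lemma Phi_mem_UqSym (hx : 0 < x) (hq : q ∈ Ubases M x) :
    Phi M x q ∈ UqSym M q ∧ piQ M q (Phi M x q) = x := by
  obtain ⟨⟨hq1, hqM⟩, d, rfl, hun⟩ := hq
  have hd : d ∈ UqSym M q := fun e he => hun e he
  rw [Phi_piQ hq1 hqM hd hx]
  exact ⟨hd, rfl⟩

end Unique

section RhoMetric

variable {M : ℕ} {c d e : Digits M}

lemma sInf_ne_eq_firstDiff (h : c ≠ d) : sInf {i | c i ≠ d i} = firstDiff c d :=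
  le_antisymm (Nat.sInf_le (apply_firstDiff_ne h))
    (le_csInf (Function.ne_iff.1 h) fun _ hm =>
      not_lt.1 fun hlt => hm (apply_eq_of_lt_firstDiff hlt))

lemma rho_of_ne (h : c ≠ d) : rho M c d = ((M : ℝ) + 1)⁻¹ ^ (firstDiff c d + 1) := by
  rw [rho, if_neg h, sInf_ne_eq_firstDiff h,
    show -((firstDiff c d : ℤ) + 1) = -((firstDiff c d + 1 : ℕ) : ℤ) by push_cast; ring,
    zpow_neg, zpow_natCast, inv_pow]

lemma rho_nonneg (c d : Digits M) : 0 ≤ rho M c d := by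
  by_cases h : c = d
  · simp [rho, h]
  · rw [rho_of_ne h]; positivity

lemma rho_comm (c d : Digits M) : rho M c d = rho M d c := by
  by_cases h : c = d
  · rw [h]
  · rw [rho_of_ne h, rho_of_ne (Ne.symm h), firstDiff_comm]

lemma rho_le_max (c d e : Digits M) : rho M c e ≤ max (rho M c d) (rho M d e) := by
  by_cases hce : c = e
  · simp only [rho, if_pos hce]
    exact le_max_of_le_left (rho_nonneg c d)
  by_cases hcd : c = d
  · subst hcd; exact le_max_right _ _
  by_cases hde : d = e
  · subst hde; exact le_max_left _ _
  have hr0 : (0 : ℝ) ≤ ((M : ℝ) + 1)⁻¹ := by positivity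
  have hr1 : ((M : ℝ) + 1)⁻¹ ≤ 1 :=
    inv_le_one_of_one_le₀ (by linarith [M.cast_nonneg (α := ℝ)])
  rw [rho_of_ne hce, rho_of_ne hcd, rho_of_ne hde]
  rcases min_le_iff.1 (min_firstDiff_le c d e hce) with h | h
  · exact le_max_of_le_left (pow_le_pow_of_le_one hr0 hr1 (by omega))
  · exact le_max_of_le_right (pow_le_pow_of_le_one hr0 hr1 (by omega))

/-- A type synonym, so that the metric `rho M` does not clash with the product uniformity of
`ℕ → Fin (M + 1)`. -/
def RhoDigits (M : ℕ) : Type := Digits M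

noncomputable instance : MetricSpace (RhoDigits M) where
  dist := rho M
  dist_self _ := if_pos rfl
  dist_comm := rho_comm
  dist_triangle c d e :=
    (rho_le_max c d e).trans (max_le_add_of_nonneg (rho_nonneg c d) (rho_nonneg d e))
  eq_of_dist_eq_zero {c d} h := by
    by_contra hne
    exact (pow_pos (by positivity) _).ne' ((rho_of_ne hne).symm.trans h)

end RhoMetric

section GeneralizedHausdorff

open MeasureTheory.Measure

variable {X : Type*} [MetricSpace X]

lemma gdiam_dist (A : Set X) : gdiam dist A = Metric.ediam A := by
  simp only [gdiam, Metric.ediam, edist_dist]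

/-- For `s = 0` the two differ: `gHMeasure` charges an empty piece of a cover `0 ^ 0 = 1`. -/
lemma gHMeasure_dist [MeasurableSpace X] [BorelSpace X] {s : ℝ} (hs : 0 < s) (A : Set X) :
    gHMeasure dist s A = μH[s] A := by
  have hterm : ∀ t : Set X, (⨆ _ : t.Nonempty, Metric.ediam t ^ s) = Metric.ediam t ^ s := by
    intro t
    rcases t.eq_empty_or_nonempty with rfl | ht
    · simp [ENNReal.zero_rpow_of_pos hs]
    · simp [ht]
  simp only [gHMeasure, hausdorffMeasure_apply, gdiam_dist, hterm]
  set F : ℝ≥0∞ → ℝ≥0∞ := fun r => ⨅ (t : ℕ → Set X) (_ : A ⊆ ⋃ n, t n)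
    (_ : ∀ n, Metric.ediam (t n) ≤ r), ∑' n, Metric.ediam (t n) ^ s
  have hF : Antitone F := fun r r' hrr' =>
    iInf_mono fun _ => iInf_mono fun _ =>
      iInf_mono' fun h => ⟨fun n => (h n).trans hrr', le_rfl⟩
  refine le_antisymm (iSup₂_le fun δ hδ => le_iSup₂_of_le (ENNReal.ofReal δ)
    (ENNReal.ofReal_pos.2 hδ) le_rfl) (iSup₂_le fun r hr => ?_)
  have hne : min r 1 ≠ ⊤ := ne_top_of_le_ne_top ENNReal.one_ne_top (min_le_right r 1)
  refine le_iSup₂_of_le (min r 1).toReal (ENNReal.toReal_pos (lt_min hr one_pos).ne' hne) ?_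
  rw [ENNReal.ofReal_toReal hne]
  exact hF (min_le_left r 1)

theorem gdimH_dist (A : Set X) : gdimH dist A = dimH A := by
  borelize X
  have key : ∀ s : ℝ≥0, s ≠ 0 → (gHMeasure dist s A = ⊤ ↔ μH[s] A = ⊤) := by
    intro s hs0
    rw [gHMeasure_dist (NNReal.coe_pos.2 (pos_iff_ne_zero.2 hs0))]
  rw [gdimH, dimH_def]
  refine le_antisymm (iSup₂_le fun s hs => ?_) (iSup₂_le fun s hs => ?_) <;>
    rcases eq_or_ne s 0 with rfl | hs0
  · simp
  · exact le_iSup₂_of_le s ((key s hs0).1 hs) le_rfl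
  · simp
  · exact le_iSup₂_of_le s ((key s hs0).2 hs) le_rfl

end GeneralizedHausdorff

lemma gdimH_rho {M : ℕ} (A : Set (Digits M)) : gdimH (rho M) A = dimH (X := RhoDigits M) A :=
  gdimH_dist (X := RhoDigits M) A

theorem dimH_le_dimH_image_div {X Y : Type*} [EMetricSpace X] [EMetricSpace Y] {f : X → Y}
    {s : Set X} {C r : ℝ≥0} (hr : 0 < r)
    (h : ∀ x ∈ s, ∀ y ∈ s, edist x y ≤ C * edist (f x) (f y) ^ (r : ℝ)) :
    dimH s ≤ dimH (f '' s) / r := by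
  rcases s.eq_empty_or_nonempty with rfl | ⟨x₀, -⟩
  · simp
  have : Nonempty X := ⟨x₀⟩
  have hinj : InjOn f s := fun x hx y hy hxy => by
    simpa [hxy, ENNReal.zero_rpow_of_pos (NNReal.coe_pos.2 hr)] using h x hx y hy
  have hg : HolderOnWith C r (Function.invFunOn f s) (f '' s) := by
    rintro _ ⟨x, hx, rfl⟩ _ ⟨y, hy, rfl⟩
    rw [hinj.leftInvOn_invFunOn hx, hinj.leftInvOn_invFunOn hy]
    exact h x hx y hy
  simpa [hinj.invFunOn_image subset_rfl] using hg.dimH_image_le hr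

lemma inv_pow_rpow_logb {B R : ℝ} (hB : 0 < B) (hB1 : B ≠ 1) (hR : 0 < R) (k : ℕ) :
    (B⁻¹ ^ k) ^ Real.logb B R = R⁻¹ ^ k := by
  rw [← Real.rpow_natCast, ← Real.rpow_mul (inv_nonneg.2 hB.le), mul_comm (k : ℝ),
    Real.rpow_mul (inv_nonneg.2 hB.le), Real.inv_rpow hB.le, Real.rpow_logb hB hB1 hR,
    Real.rpow_natCast]

namespace RhoDigits

variable {M : ℕ} {X : Type*} [PseudoMetricSpace X] {f : X → RhoDigits M} {s : Set X}

lemma dist_def (c d : RhoDigits M) : dist c d = rho M c d := rfl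

lemma holderOnWith_of_div_pow_le_dist {B K : ℝ} (hB : 1 < B) (hK : 0 < K)
    (h : ∀ p ∈ s, ∀ q ∈ s, f p ≠ f q →
      K / B ^ (firstDiff (f p) (f q) + 1) ≤ dist p q) :
    HolderOnWith (K⁻¹ ^ Real.logb B (M + 1)).toNNReal (Real.logb B (M + 1)).toNNReal f s := by
  intro p hp q hq
  by_cases hpq : f p = f q
  · simp [hpq]
  set θ := Real.logb B (M + 1)
  have hθ : 0 ≤ θ := Real.logb_nonneg hB (by linarith [M.cast_nonneg (α := ℝ)])
  have hdist : dist (f p) (f q) ≤ K⁻¹ ^ θ * dist p q ^ θ := by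
    have hle := h p hp q hq hpq
    rw [dist_def, rho_of_ne hpq]
    generalize firstDiff (f p) (f q) + 1 = k at hle ⊢
    rw [← inv_pow_rpow_logb (by linarith) hB.ne' (by positivity),
      ← Real.mul_rpow (by positivity) dist_nonneg, inv_pow]
    gcongr
    rwa [inv_mul_eq_div, le_div_iff₀ hK, mul_comm, ← div_eq_mul_inv]
  calc edist (f p) (f q) = ENNReal.ofReal (dist (f p) (f q)) := edist_dist _ _
    _ ≤ ENNReal.ofReal (K⁻¹ ^ θ * dist p q ^ θ) := ENNReal.ofReal_le_ofReal hdist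
    _ = _ := by
      rw [ENNReal.ofReal_mul (by positivity), ← ENNReal.ofReal_rpow_of_nonneg dist_nonneg hθ,
        ← edist_dist, Real.coe_toNNReal _ hθ]
      rfl

lemma edist_le_of_dist_le_div_pow (hM : 0 < M) {A K : ℝ} (hA : 1 < A) (hK : 0 ≤ K)
    (h : ∀ p ∈ s, ∀ q ∈ s, p ≠ q →
      f p ≠ f q ∧ dist p q ≤ K / A ^ (firstDiff (f p) (f q) + 1)) :
    ∀ p ∈ s, ∀ q ∈ s,
      edist p q ≤ K.toNNReal * edist (f p) (f q) ^ ((Real.logb (M + 1) A).toNNReal : ℝ) := by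
  intro p hp q hq
  rcases eq_or_ne p q with rfl | hne
  · simp
  obtain ⟨hfne, hle⟩ := h p hp q hq hne
  set r := Real.logb (M + 1) A
  have hM1 : (1 : ℝ) < M + 1 := by linarith [(Nat.one_le_cast (α := ℝ)).2 hM]
  have hr : 0 ≤ r := Real.logb_nonneg hM1 hA.le
  have hdist : dist p q ≤ K * dist (f p) (f q) ^ r := by
    rw [dist_def, rho_of_ne hfne]
    generalize firstDiff (f p) (f q) + 1 = k at hle ⊢
    rwa [inv_pow_rpow_logb (by linarith) hM1.ne' (by linarith), inv_pow, ← div_eq_mul_inv]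
  calc edist p q = ENNReal.ofReal (dist p q) := edist_dist _ _
    _ ≤ ENNReal.ofReal (K * dist (f p) (f q) ^ r) := ENNReal.ofReal_le_ofReal hdist
    _ = _ := by
      rw [ENNReal.ofReal_mul hK, ← ENNReal.ofReal_rpow_of_nonneg dist_nonneg hr,
        ← edist_dist, Real.coe_toNNReal _ hr]
      rfl

end RhoDigits

section Ubases

variable {M : ℕ} {x a b p q : ℝ}

theorem lexLt_Phi (hx : 0 < x) (hp : p ∈ Ubases M x) (hq : q ∈ Ubases M x) (hpq : p < q) :
    lexLt (Phi M x p) (Phi M x q) := by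
  obtain ⟨hcU, hc⟩ := Phi_mem_UqSym hx hp
  obtain ⟨hdU, hd⟩ := Phi_mem_UqSym hx hq
  set c := Phi M x p
  set d := Phi M x q
  have hp1 : 1 < p := hp.1.1
  have hq1 : 1 < q := hq.1.1
  obtain ⟨j, hj⟩ : ∃ j, c j ≠ 0 := by
    by_contra! h
    rw [piQ_eq_zero h] at hc
    linarith
  have hcq : piQ M q c < x := hc ▸ piQ_lt_piQ_of_lt hp1 hpq hj
  have hne : c ≠ d := fun h => by rw [h, hd] at hcq; exact lt_irrefl x hcq
  refine ⟨firstDiff c d, fun i hi => apply_eq_of_lt_firstDiff hi,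
    lt_of_le_of_ne (not_lt.1 fun hlt => ?_) (apply_firstDiff_ne hne)⟩
  set n := firstDiff c d
  have hTd := piQ_shift_lt_one hq1 hq.1.2 hdU (lt_of_lt_of_le hlt (Fin.is_le _))
  have hTc := piQ_nonneg (M := M) (q := q) (by linarith) (shift (n + 1) c)
  have hdigit : (d n : ℝ) + 1 ≤ c n := by exact_mod_cast hlt
  have hdiff := piQ_sub_piQ_of_eqOn_succ hq1 fun i (hi : i < n) =>
    (apply_eq_of_lt_firstDiff hi).symm
  rw [hd] at hdiff
  have : 0 < ((c n : ℝ) - d n + (piQ M q (shift (n + 1) c) - piQ M q (shift (n + 1) d)))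
      / q ^ (n + 1) := div_pos (by linarith) (by positivity)
  linarith

lemma firstDiff_eq {c d : Digits M} {n : ℕ} (h : ∀ i < n, c i = d i) (hn : c n ≠ d n) :
    firstDiff c d = n := by
  have hne : c ≠ d := fun h' => hn (h' ▸ rfl)
  exact le_antisymm (not_lt.1 fun hlt => hn (apply_eq_of_lt_firstDiff hlt))
    (not_lt.1 fun hlt => apply_firstDiff_ne hne (h _ hlt))

theorem exists_div_pow_le_sub (hx : 0 < x) (ha : 1 < a) (hab : a < b) (hb : b < M + 1) :
    ∃ K > 0, ∀ p ∈ Ubases M x ∩ Ioo a b, ∀ q ∈ Ubases M x ∩ Ioo a b, p < q →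
      ∀ n : ℕ, (∀ i < n, Phi M x p i = Phi M x q i) → Phi M x p n < Phi M x q n →
        K / b ^ (n + 1) ≤ q - p := by
  obtain ⟨L, hL, hLip⟩ := exists_piQ_sub_piQ_le (M := M) ha
  have hb1 : 0 < b - 1 := by linarith
  set γ := M / (b - 1) - 1
  have hγ : 0 < γ := by rw [sub_pos, lt_div_iff₀ hb1]; linarith
  refine ⟨γ / L, div_pos hγ hL, ?_⟩
  rintro p ⟨hpU, hap, hpb⟩ q ⟨hqU, -, hqb⟩ hpq n hagree hlt
  obtain ⟨hcU, hc⟩ := Phi_mem_UqSym hx hpU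
  obtain ⟨hdU, hd⟩ := Phi_mem_UqSym hx hqU
  set c := Phi M x p
  set d := Phi M x q
  have hp1 : 1 < p := ha.trans hap
  have hq1 : 1 < q := hp1.trans hpq
  have hTc := piQ_shift_lt_one hp1 hpU.1.2 hcU (lt_of_lt_of_le hlt (Fin.is_le _))
  have hTd := sub_one_lt_piQ_shift hq1 hqU.1.2 hdU
    (Fin.pos_iff_ne_zero.1 ((Fin.zero_le _).trans_lt hlt))
  have hTd' := piQ_le_piQ_of_le hp1 hpq.le (shift (n + 1) d)
  have hγq : γ ≤ M / (q - 1) - 1 := by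
    have : (M : ℝ) / (b - 1) ≤ M / (q - 1) := by gcongr
    linarith
  have hdigit : (c n : ℝ) + 1 ≤ d n := by exact_mod_cast hlt
  have hgap : γ / b ^ (n + 1) ≤ piQ M p d - piQ M p c := by
    rw [piQ_sub_piQ_of_eqOn_succ hp1 hagree]
    calc γ / b ^ (n + 1) ≤ γ / p ^ (n + 1) := by gcongr
      _ ≤ _ := by gcongr; linarith
  have hLpq := hLip d p q hap.le hpq.le
  rw [hc, ← hd] at hgap
  rw [div_right_comm, div_le_iff₀ hL]
  linarith

lemma exists_digit_ne_zero_lt (hx : 0 < x) (ha : 1 < a) :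
    ∃ J, ∀ q, a ≤ q → ∀ d : Digits M, piQ M q d = x → ∃ j < J, d j ≠ 0 := by
  obtain ⟨J, hJ⟩ := pow_unbounded_of_one_lt (M / ((a - 1) * x)) ha
  refine ⟨J, fun q haq d hd => ?_⟩
  by_contra! h
  have ha1 : 0 < a - 1 := by linarith
  have hxJ : x ≤ M / (a - 1) / a ^ J :=
    hd ▸ (piQ_le_of_eqOn_zero (ha.trans_le haq) h).trans (by gcongr)
  rw [div_lt_iff₀ (by positivity)] at hJ
  rw [div_div, le_div_iff₀ (by positivity)] at hxJ
  linarith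

theorem exists_sub_le_div_pow (hx : 0 < x) (ha : 1 < a) (hab : a < b) :
    ∃ K ≥ 0, ∀ p ∈ Ubases M x ∩ Ioo a b, ∀ q ∈ Ubases M x ∩ Ioo a b, p < q →
      ∀ n : ℕ, (∀ i < n, Phi M x p i = Phi M x q i) → q - p ≤ K / a ^ (n + 1) := by
  obtain ⟨J, hJ⟩ := exists_digit_ne_zero_lt (M := M) hx ha
  have ha1 : 0 < a - 1 := by linarith
  have hb : 0 < b := by linarith
  refine ⟨b ^ (J + 1) * (M / (a - 1)) * a, by positivity, ?_⟩
  rintro p ⟨hpU, hap, -⟩ q ⟨hqU, -, hqb⟩ hpq n hagree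
  obtain ⟨-, hc⟩ := Phi_mem_UqSym hx hpU
  obtain ⟨-, hd⟩ := Phi_mem_UqSym hx hqU
  set c := Phi M x p
  set d := Phi M x q
  have hp1 : 1 < p := ha.trans hap
  have hq1 : 1 < q := hp1.trans hpq
  obtain ⟨j, hjJ, hj⟩ := hJ q (hap.trans hpq).le d hd
  have hlow : (q - p) / b ^ (J + 1) ≤ piQ M p d - piQ M q d :=
    calc (q - p) / b ^ (J + 1) ≤ (q - p) / q ^ (j + 2) := by
          have : 0 ≤ q - p := by linarith
          gcongr
          calc q ^ (j + 2) ≤ q ^ (J + 1) := pow_le_pow_right₀ hq1.le (by omega)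
            _ ≤ b ^ (J + 1) := by gcongr
      _ ≤ _ := piQ_sub_piQ_ge hp1 hpq.le hj
  have hup : piQ M p d - piQ M p c ≤ M / (a - 1) / a ^ n := by
    rw [piQ_sub_piQ_of_eqOn hp1 hagree]
    have := piQ_le hp1 (shift n d)
    have := piQ_nonneg (M := M) (by linarith) (shift n c) (q := p)
    calc _ ≤ M / (p - 1) / p ^ n := by gcongr; linarith
      _ ≤ M / (a - 1) / a ^ n := by gcongr
  rw [hc, ← hd] at hup
  calc q - p = (q - p) / b ^ (J + 1) * b ^ (J + 1) := by field_simp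
    _ ≤ M / (a - 1) / a ^ n * b ^ (J + 1) :=
        mul_le_mul_of_nonneg_right (hlow.trans hup) (by positivity)
    _ = _ := by field_simp; ring

theorem exists_firstDiff_Phi_bounds (hx : 0 < x) (ha : 1 < a) (hab : a < b) (hb : b < M + 1) :
    ∃ K₁ > 0, ∃ K₂ ≥ 0,
      ∀ p ∈ Ubases M x ∩ Ioo a b, ∀ q ∈ Ubases M x ∩ Ioo a b, p ≠ q →
      Phi M x p ≠ Phi M x q ∧
      K₁ / b ^ (firstDiff (Phi M x p) (Phi M x q) + 1) ≤ dist p q ∧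
      dist p q ≤ K₂ / a ^ (firstDiff (Phi M x p) (Phi M x q) + 1) := by
  obtain ⟨K₁, hK₁, hlow⟩ := exists_div_pow_le_sub (M := M) hx ha hab hb
  obtain ⟨K₂, hK₂, hup⟩ := exists_sub_le_div_pow (M := M) hx ha hab
  refine ⟨K₁, hK₁, K₂, hK₂, fun p hp q hq hne => ?_⟩
  wlog hpq : p < q generalizing p q
  · obtain ⟨hΦ, h₁, h₂⟩ :=
      this q hq p hp hne.symm (lt_of_le_of_ne (not_lt.1 hpq) hne.symm)
    rw [firstDiff_comm, dist_comm]
    exact ⟨hΦ.symm, h₁, h₂⟩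
  obtain ⟨n, hagree, hlt⟩ := lexLt_Phi hx hp.1 hq.1 hpq
  rw [firstDiff_eq hagree hlt.ne, Real.dist_eq, abs_sub_comm, abs_of_pos (by linarith)]
  exact ⟨fun h => hlt.ne (congrFun h n), hlow p hp q hq hpq n hagree hlt,
    hup p hp q hq hpq n hagree⟩

end Ubases

theorem dimH_Ubases_inter_estimate_general (M : ℕ) (x : ℝ) (hx : 0 < x) (a b : ℝ)
    (ha : 1 < a) (hab : a < b) (hb : b < (M : ℝ) + 1) :
    gdimH (rho M) (Phi M x '' (Ubases M x ∩ Set.Ioo a b)) /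
        ENNReal.ofReal (Real.logb ((M : ℝ) + 1) b) ≤ dimH (Ubases M x ∩ Set.Ioo a b) ∧
    dimH (Ubases M x ∩ Set.Ioo a b) ≤
      gdimH (rho M) (Phi M x '' (Ubases M x ∩ Set.Ioo a b)) /
        ENNReal.ofReal (Real.logb ((M : ℝ) + 1) a) := by
  set S := Ubases M x ∩ Set.Ioo a b
  set Φ : ℝ → RhoDigits M := Phi M x
  have hM : 0 < M := by exact_mod_cast (show (0 : ℝ) < M by linarith)
  have hM1 : (1 : ℝ) < M + 1 := by linarith
  obtain ⟨K₁, hK₁, K₂, hK₂, hK⟩ := exists_firstDiff_Phi_bounds hx ha hab hb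
  rw [gdimH_rho]
  constructor
  · have hH := RhoDigits.holderOnWith_of_div_pow_le_dist (f := Φ) (s := S) (ha.trans hab) hK₁
      fun p hp q hq hne => (hK p hp q hq fun h => hne (congrArg Φ h)).2.1
    have hlogb : 0 < Real.logb (M + 1) b := Real.logb_pos hM1 (ha.trans hab)
    refine ENNReal.div_le_of_le_mul ((hH.dimH_image_le ?_).trans_eq ?_)
    · exact Real.toNNReal_pos.2 (Real.logb_pos (ha.trans hab) hM1)
    · rw [← Real.inv_logb, Real.toNNReal_inv, ENNReal.coe_inv (by simpa using hlogb),
        div_eq_mul_inv, inv_inv]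
      rfl
  · refine dimH_le_dimH_image_div (C := K₂.toNNReal)
      (Real.toNNReal_pos.2 (Real.logb_pos hM1 ha)) ?_
    exact RhoDigits.edist_le_of_dist_le_div_pow hM ha hK₂ fun p hp q hq hne =>
      ⟨(hK p hp q hq hne).1, (hK p hp q hq hne).2.2⟩

/-- Proposition (local dimension estimate): for `x > 0` and `1 < a < b < M+1`,
`dim_H Φ_x(𝒰(x) ∩ (a,b)) / log b ≤ dim_H (𝒰(x) ∩ (a,b)) ≤ dim_H Φ_x(𝒰(x) ∩ (a,b)) / log a`,
where the image is measured with the metric `ρ`, the subset of `ℝ` with the Euclidean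
metric, and logarithms are to base `M+1`. -/
theorem dimH_Ubases_inter_estimate (M : ℕ) (hM : 0 < M) (x : ℝ) (hx : 0 < x) (a b : ℝ)
    (ha : 1 < a) (hab : a < b) (hb : b < (M : ℝ) + 1) :
    gdimH (rho M) (Phi M x '' (Ubases M x ∩ Set.Ioo a b)) /
        ENNReal.ofReal (Real.logb ((M : ℝ) + 1) b) ≤ dimH (Ubases M x ∩ Set.Ioo a b) ∧
    dimH (Ubases M x ∩ Set.Ioo a b) ≤
      gdimH (rho M) (Phi M x '' (Ubases M x ∩ Set.Ioo a b)) /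
        ENNReal.ofReal (Real.logb ((M : ℝ) + 1) a) :=
  dimH_Ubases_inter_estimate_general M x hx a b ha hab hb

end Expansions
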